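/- arXiv:2505.04248 — 7 statements merged into one kernel-verified Lean document; each statement's English description precedes it below -/
import Mathlib

section
/- Let G be a finite simple graph with clique partition π = {W₁,…,W_r}, and let G^π be the clique-whiskered graph obtained by adding a new vertex wᵢ adjacent to every vertex of Wᵢ for each i. Then there is a bijection between the set of minimal vertex covers of G^π and the set of minimal vertex covers of the whisker graph W(G) (the graph obtained from G by attaching a pendant vertex to every vertex of G). -/
def cliqueWhisker {V ι : Type*} (G : SimpleGraph V) (p : V → ι) :
    SimpleGraph (V ⊕ ι) :=
  SimpleGraph.fromRel (fun a b =>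
    match a, b with
    | Sum.inl u, Sum.inl v => G.Adj u v
    | Sum.inl u, Sum.inr i => p u = i
    | _, _ => False)

def whiskerGraph {V : Type*} (G : SimpleGraph V) : SimpleGraph (V ⊕ V) :=
  SimpleGraph.fromRel (fun a b =>
    match a, b with
    | Sum.inl u, Sum.inl v => G.Adj u v
    | Sum.inl u, Sum.inr w => u = w
    | _, _ => False)

def IsVertexCover {V : Type*} (G : SimpleGraph V) (C : Set V) : Prop :=
  ∀ ⦃u v : V⦄, G.Adj u v → u ∈ C ∨ v ∈ C

def IsMinVertexCover {V : Type*} (G : SimpleGraph V) (C : Set V) : Prop :=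
  IsVertexCover G C ∧ ∀ D ⊆ C, IsVertexCover G D → D = C

def IsIndep {V : Type*} (G : SimpleGraph V) (A : Set V) : Prop :=
  ∀ u ∈ A, ∀ v ∈ A, ¬ G.Adj u v

/-!
Both graphs are clique-whiskered graphs of `G`: the whisker graph is the one for the partition
into singletons. For any clique partition, the minimal vertex covers of `G^π` correspond to the
independent sets `A` of `G`, via `A ↦ (V \ A) ∪ {wᵢ : Wᵢ meets A}`: an independent set meets
each clique `Wᵢ` at most once, so every vertex of the cover has a neighbour outside it
(an element of `A` in its clique, or else its own whisker). Conversely, a minimal cover is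
determined by the vertices of `G` it misses, since minimality puts `wᵢ` in it exactly when it
misses some vertex of `Wᵢ`.
-/

open Sum

lemma isMinVertexCover_iff {V : Type*} {H : SimpleGraph V} {C : Set V} :
    IsMinVertexCover H C ↔ IsVertexCover H C ∧ ∀ v ∈ C, ∃ u ∉ C, H.Adj u v := by
  refine ⟨fun ⟨hC, hmin⟩ => ⟨hC, fun v hv => ?_⟩, fun ⟨hC, hcrit⟩ => ⟨hC, fun D hDC hD => ?_⟩⟩
  · by_contra! h
    have hcover : IsVertexCover H (C \ {v}) := by
      intro a b hab
      by_cases ha : a = v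
      · subst ha
        exact Or.inr ⟨not_not.1 fun hb => h b hb hab.symm, hab.ne.symm⟩
      by_cases hb : b = v
      · subst hb
        exact Or.inl ⟨not_not.1 fun ha' => h a ha' hab, ha⟩
      exact (hC hab).imp (fun h => ⟨h, ha⟩) (fun h => ⟨h, hb⟩)
    exact (hmin _ Set.sdiff_subset hcover ▸ hv).2 rfl
  · refine hDC.antisymm fun v hv => ?_
    obtain ⟨u, hu, huv⟩ := hcrit v hv
    exact (hD huv).resolve_left fun hu' => hu (hDC hu')

namespace cliqueWhisker

variable {V ι : Type*} {G : SimpleGraph V} {p : V → ι}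

@[simp]
lemma adj_inl_inl {u v : V} : (cliqueWhisker G p).Adj (inl u) (inl v) ↔ G.Adj u v := by
  simp only [cliqueWhisker, SimpleGraph.fromRel_adj, ne_eq, inl.injEq]
  exact ⟨fun ⟨_, h⟩ => h.elim id G.adj_symm, fun h => ⟨h.ne, Or.inl h⟩⟩

@[simp]
lemma adj_inl_inr {u : V} {i : ι} : (cliqueWhisker G p).Adj (inl u) (inr i) ↔ p u = i := by
  simp [cliqueWhisker]

@[simp]
lemma adj_inr_inl {u : V} {i : ι} : (cliqueWhisker G p).Adj (inr i) (inl u) ↔ p u = i := by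
  simp [cliqueWhisker]

@[simp]
lemma not_adj_inr_inr {i j : ι} : ¬ (cliqueWhisker G p).Adj (inr i) (inr j) := by
  simp [cliqueWhisker]

variable (p) in
def coverOfIndep (A : Set V) : Set (V ⊕ ι) := inl '' Aᶜ ∪ inr '' (p '' A)

@[simp]
lemma inl_mem_coverOfIndep {A : Set V} {v : V} : inl v ∈ coverOfIndep p A ↔ v ∉ A := by
  simp [coverOfIndep]

@[simp]
lemma inr_mem_coverOfIndep {A : Set V} {i : ι} :
    inr i ∈ coverOfIndep p A ↔ ∃ a ∈ A, p a = i := by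
  simp [coverOfIndep]

lemma isMinVertexCover_coverOfIndep (hclique : ∀ u v, p u = p v → u ≠ v → G.Adj u v)
    {A : Set V} (hA : IsIndep G A) : IsMinVertexCover (cliqueWhisker G p) (coverOfIndep p A) := by
  refine isMinVertexCover_iff.2 ⟨?_, ?_⟩
  · rintro (u | i) (v | j) hadj
    · by_cases hu : u ∈ A
      · exact Or.inr <| inl_mem_coverOfIndep.2 fun hv => hA u hu v hv (adj_inl_inl.1 hadj)
      · exact Or.inl <| inl_mem_coverOfIndep.2 hu
    · by_cases hu : u ∈ A
      · exact Or.inr <| inr_mem_coverOfIndep.2 ⟨u, hu, adj_inl_inr.1 hadj⟩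
      · exact Or.inl <| inl_mem_coverOfIndep.2 hu
    · by_cases hv : v ∈ A
      · exact Or.inl <| inr_mem_coverOfIndep.2 ⟨v, hv, adj_inr_inl.1 hadj⟩
      · exact Or.inr <| inl_mem_coverOfIndep.2 hv
    · exact (not_adj_inr_inr hadj).elim
  · rintro (v | i) hv
    · by_cases hclass : ∃ a ∈ A, p a = p v
      · obtain ⟨a, ha, hpa⟩ := hclass
        have hva : a ≠ v := fun h => inl_mem_coverOfIndep.1 hv (h ▸ ha)
        exact ⟨inl a, by simpa using ha, adj_inl_inl.2 (hclique a v hpa hva)⟩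
      · exact ⟨inr (p v), by simpa using hclass, adj_inr_inl.2 rfl⟩
    · obtain ⟨a, ha, hpa⟩ := inr_mem_coverOfIndep.1 hv
      exact ⟨inl a, by simpa using ha, adj_inl_inr.2 hpa⟩

lemma isIndep_of_isVertexCover {C : Set (V ⊕ ι)} (hC : IsVertexCover (cliqueWhisker G p) C) :
    IsIndep G {v | inl v ∉ C} :=
  fun _ hu _ hv hadj => (hC (adj_inl_inl.2 hadj)).elim hu hv

lemma coverOfIndep_eq {C : Set (V ⊕ ι)} (hC : IsMinVertexCover (cliqueWhisker G p) C) :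
    coverOfIndep p {v | inl v ∉ C} = C := by
  obtain ⟨hcover, hcrit⟩ := isMinVertexCover_iff.1 hC
  ext (v | i)
  · simp
  · refine inr_mem_coverOfIndep.trans ⟨fun ⟨a, ha, hpa⟩ => ?_, fun hi => ?_⟩
    · exact (hcover (adj_inl_inr.2 hpa)).resolve_left ha
    · obtain ⟨a | j, hu, hadj⟩ := hcrit _ hi
      · exact ⟨a, hu, adj_inl_inr.1 hadj⟩
      · exact (not_adj_inr_inr hadj).elim

def minVertexCoverEquivIndep (hclique : ∀ u v, p u = p v → u ≠ v → G.Adj u v) :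
    {C : Set (V ⊕ ι) // IsMinVertexCover (cliqueWhisker G p) C} ≃ {A : Set V // IsIndep G A} where
  toFun C := ⟨{v | inl v ∉ C.1}, isIndep_of_isVertexCover C.2.1⟩
  invFun A := ⟨coverOfIndep p A, isMinVertexCover_coverOfIndep hclique A.2⟩
  left_inv C := Subtype.ext (coverOfIndep_eq C.2)
  right_inv A := Subtype.ext <| Set.ext fun v => by simp

end cliqueWhisker

lemma whiskerGraph_eq_cliqueWhisker_id {V : Type*} (G : SimpleGraph V) :
    whiskerGraph G = cliqueWhisker G id := by
  ext (u | u) (v | v) <;> simp [whiskerGraph, cliqueWhisker]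

theorem stmt0_general {V : Type*} {r : ℕ} (G : SimpleGraph V) (p : V → Fin r)
    (hclique : ∀ u v : V, p u = p v → u ≠ v → G.Adj u v) :
    Nonempty ({C : Set (V ⊕ Fin r) // IsMinVertexCover (cliqueWhisker G p) C} ≃
      {C : Set (V ⊕ V) // IsMinVertexCover (whiskerGraph G) C}) := by
  rw [whiskerGraph_eq_cliqueWhisker_id]
  exact ⟨(cliqueWhisker.minVertexCoverEquivIndep hclique).trans
    (cliqueWhisker.minVertexCoverEquivIndep fun _ _ h hne => (hne h).elim).symm⟩

theorem stmt0 {V : Type*} [Fintype V] {r : ℕ} (G : SimpleGraph V) (p : V → Fin r)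
    (hclique : ∀ u v : V, p u = p v → u ≠ v → G.Adj u v)
    (hsurj : Function.Surjective p) :
    Nonempty ({C : Set (V ⊕ Fin r) // IsMinVertexCover (cliqueWhisker G p) C} ≃
      {C : Set (V ⊕ V) // IsMinVertexCover (whiskerGraph G) C}) :=
  stmt0_general G p hclique
end

section
/- Let G be a finite simple graph with clique partition π = {W₁,…,W_r} and let C be a minimal vertex cover of the clique-whiskered graph G^π. If wᵢ ∈ C, then there is exactly one vertex of Wᵢ not contained in C. -/
/-
Minimality forces the whisker `wᵢ ∈ C` to have a neighbour outside `C`, otherwise `C \ {wᵢ}`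
would still be a cover; its neighbours are exactly the vertices of `Wᵢ`. Two distinct vertices
of `Wᵢ` outside `C` would be adjacent (since `Wᵢ` is a clique) and leave an edge uncovered.
-/

theorem IsMinVertexCover.exists_adj_notMem {V : Type*} {G : SimpleGraph V} {C : Set V}
    (hC : IsMinVertexCover G C) {v : V} (hv : v ∈ C) : ∃ u, G.Adj v u ∧ u ∉ C := by
  by_contra! hN
  have hcover : IsVertexCover G (C \ {v}) := by
    intro a b hab
    by_cases ha : a = v
    · subst ha
      exact Or.inr ⟨hN b hab, hab.ne.symm⟩
    by_cases hb : b = v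
    · subst hb
      exact Or.inl ⟨hN a hab.symm, hab.ne⟩
    exact (hC.1 hab).imp (fun h => ⟨h, ha⟩) (fun h => ⟨h, hb⟩)
  have hvD : v ∈ C \ {v} := (hC.2 _ Set.sdiff_subset hcover).symm ▸ hv
  exact hvD.2 rfl

section cliqueWhisker

variable {V ι : Type*} {G : SimpleGraph V} {p : V → ι}

theorem cliqueWhisker_adj_inl_inl {x y : V} :
    (cliqueWhisker G p).Adj (.inl x) (.inl y) ↔ G.Adj x y := by
  simp only [cliqueWhisker, SimpleGraph.fromRel_adj, ne_eq, Sum.inl.injEq]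
  exact ⟨fun h => h.2.elim id G.adj_symm, fun h => ⟨h.ne, .inl h⟩⟩

theorem cliqueWhisker_adj_inr {i : ι} {u : V ⊕ ι} :
    (cliqueWhisker G p).Adj (.inr i) u ↔ ∃ x, u = .inl x ∧ p x = i := by
  rcases u with x | j <;> simp [cliqueWhisker]

end cliqueWhisker

theorem stmt1_general {V : Type*} {r : ℕ} (G : SimpleGraph V) (p : V → Fin r)
    (hclique : ∀ u v : V, p u = p v → u ≠ v → G.Adj u v)
    (C : Set (V ⊕ Fin r)) (hC : IsMinVertexCover (cliqueWhisker G p) C)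
    (i : Fin r) (hi : Sum.inr i ∈ C) :
    ∃! x : V, p x = i ∧ (Sum.inl x : V ⊕ Fin r) ∉ C := by
  obtain ⟨u, hiu, huC⟩ := hC.exists_adj_notMem hi
  obtain ⟨x, rfl, hx⟩ := cliqueWhisker_adj_inr.mp hiu
  refine ⟨x, ⟨hx, huC⟩, fun y ⟨hy, hyC⟩ => ?_⟩
  by_contra hyx
  have hadj : (cliqueWhisker G p).Adj (.inl y) (.inl x) :=
    cliqueWhisker_adj_inl_inl.mpr (hclique y x (hy.trans hx.symm) hyx)
  exact (hC.1 hadj).elim hyC huC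

theorem stmt1 {V : Type*} [Fintype V] {r : ℕ} (G : SimpleGraph V) (p : V → Fin r)
    (hclique : ∀ u v : V, p u = p v → u ≠ v → G.Adj u v)
    (hsurj : Function.Surjective p)
    (C : Set (V ⊕ Fin r)) (hC : IsMinVertexCover (cliqueWhisker G p) C)
    (i : Fin r) (hi : Sum.inr i ∈ C) :
    ∃! x : V, p x = i ∧ (Sum.inl x : V ⊕ Fin r) ∉ C :=
  stmt1_general G p hclique C hC i hi
end

section
/- Let G be a finite simple graph with clique partition π = {W₁,…,W_r} and let D be an independent set of the clique-whiskered graph G^π contained in V(G). Then the set of edges {{x, w_{i(x)}} : x ∈ D}, where i(x) is the index with x ∈ W_{i(x)}, is an induced matching of G^π of size |D|. -/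
def IsInducedMatching {V : Type*} (G : SimpleGraph V) (M : Finset (Sym2 V)) : Prop :=
  (↑M : Set (Sym2 V)) ⊆ G.edgeSet ∧
    ∀ e ∈ M, ∀ f ∈ M, e ≠ f → ∀ u ∈ e, ∀ v ∈ f, u ≠ v ∧ ¬ G.Adj u v

noncomputable def inducedMatchingNumber {V : Type*} [Fintype V] (G : SimpleGraph V) : ℕ :=
  sSup {n | ∃ M : Finset (Sym2 V), IsInducedMatching G M ∧ M.card = n}

open Sum

namespace cliqueWhisker

variable {V ι : Type*} {G : SimpleGraph V} {p : V → ι}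

lemma isIndep_of_isIndep_image_inl {D : Set V} (hD : IsIndep (cliqueWhisker G p) (inl '' D)) :
    IsIndep G D := fun u hu v hv huv =>
  hD (inl u) ⟨u, hu, rfl⟩ (inl v) ⟨v, hv, rfl⟩ (adj_inl_inl.mpr huv)

def whisker (p : V → ι) (x : V) : Sym2 (V ⊕ ι) := s(inl x, inr (p x))

lemma whisker_mem_edgeSet (x : V) : whisker p x ∈ (cliqueWhisker G p).edgeSet :=
  adj_inl_inr (G := G).mpr rfl

lemma whisker_injective : Function.Injective (whisker (V := V) p) := by
  intro x y h
  simp only [whisker, Sym2.eq_iff, inl.injEq, inr.injEq, reduceCtorEq, and_false, or_false] at h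
  exact h.1

lemma ne_and_not_adj_of_mem_whisker {x y : V} (hxy : x ≠ y) (hG : ¬ G.Adj x y)
    (hp : p x ≠ p y) {u v : V ⊕ ι} (hu : u ∈ whisker p x) (hv : v ∈ whisker p y) :
    u ≠ v ∧ ¬ (cliqueWhisker G p).Adj u v := by
  rw [whisker, Sym2.mem_iff] at hu hv
  rcases hu with rfl | rfl <;> rcases hv with rfl | rfl <;> simp [hxy, hG, hp, Ne.symm hp]

lemma isInducedMatching_image_whisker [DecidableEq V] [DecidableEq ι] {D : Finset V}
    (hD : IsIndep G D) (hp : Set.InjOn p D) :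
    IsInducedMatching (cliqueWhisker G p) (D.image (whisker p)) := by
  refine ⟨?_, ?_⟩
  · rw [Finset.coe_image]
    rintro _ ⟨x, -, rfl⟩
    exact whisker_mem_edgeSet x
  · simp only [Finset.mem_image]
    rintro _ ⟨x, hx, rfl⟩ _ ⟨y, hy, rfl⟩ hne
    have hxy : x ≠ y := fun h => hne (h ▸ rfl)
    exact fun u hu v hv => ne_and_not_adj_of_mem_whisker hxy (hD x hx y hy)
      (fun h => hxy (hp hx hy h)) hu hv

end cliqueWhisker

theorem stmt11_general {V : Type*} [DecidableEq V] {r : ℕ}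
    (G : SimpleGraph V) (p : V → Fin r)
    (hclique : ∀ u v : V, p u = p v → u ≠ v → G.Adj u v)
    (D : Finset V)
    (hD : IsIndep (cliqueWhisker G p) (Sum.inl '' (↑D : Set V))) :
    IsInducedMatching (cliqueWhisker G p)
        (D.image (fun x => s(Sum.inl x, (Sum.inr (p x) : V ⊕ Fin r)))) ∧
      (D.image (fun x => s(Sum.inl x, (Sum.inr (p x) : V ⊕ Fin r)))).card = D.card := by
  have hG : IsIndep G D := cliqueWhisker.isIndep_of_isIndep_image_inl hD
  have hp : Set.InjOn p D := fun x hx y hy hxy =>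
    by_contra fun hne => hG x hx y hy (hclique x y hxy hne)
  exact ⟨cliqueWhisker.isInducedMatching_image_whisker hG hp,
    Finset.card_image_of_injective D cliqueWhisker.whisker_injective⟩

theorem stmt11 {V : Type*} [Fintype V] [DecidableEq V] {r : ℕ}
    (G : SimpleGraph V) (p : V → Fin r)
    (hclique : ∀ u v : V, p u = p v → u ≠ v → G.Adj u v)
    (hsurj : Function.Surjective p)
    (D : Finset V)
    (hD : IsIndep (cliqueWhisker G p) (Sum.inl '' (↑D : Set V))) :
    IsInducedMatching (cliqueWhisker G p)
        (D.image (fun x => s(Sum.inl x, (Sum.inr (p x) : V ⊕ Fin r)))) ∧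
      (D.image (fun x => s(Sum.inl x, (Sum.inr (p x) : V ⊕ Fin r)))).card = D.card :=
  stmt11_general G p hclique D hD
end

section
/- Let G be a finite simple graph on vertex set {x₁,…,x_h} and 𝓗 = {H₁,…,H_h} with each Hᵢ a complete graph on mᵢ ≥ 1 vertices. Then every maximal independent set of the clique corona graph G∘𝓗 has exactly h vertices, consisting of precisely one vertex from each closed cluster {xᵢ} ∪ V(Hᵢ); in particular, G∘𝓗 is well-covered with independence number h. -/
def corona {V : Type*} (G : SimpleGraph V) (m : V → ℕ) :
    SimpleGraph (V ⊕ Σ v : V, Fin (m v + 1)) :=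
  SimpleGraph.fromRel (fun a b =>
    match a, b with
    | Sum.inl u, Sum.inl v => G.Adj u v
    | Sum.inl u, Sum.inr ⟨v, _⟩ => u = v
    | Sum.inr ⟨u, _⟩, Sum.inr ⟨v, _⟩ => u = v
    | _, _ => False)

lemma isIndep_insert {W : Type*} {G : SimpleGraph W} {A : Set W} {x : W} (hA : IsIndep G A)
    (hx : ∀ a ∈ A, ¬ G.Adj x a) : IsIndep G (insert x A) := by
  rintro a (rfl | ha) b (rfl | hb) hab
  · exact G.irrefl hab
  · exact hx b hb hab
  · exact hx a ha hab.symm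
  · exact hA a ha b hb hab

namespace corona

variable {V : Type*} {G : SimpleGraph V} {m : V → ℕ}

def cluster (m : V → ℕ) : (V ⊕ Σ v : V, Fin (m v + 1)) → V
  | Sum.inl v => v
  | Sum.inr ⟨v, _⟩ => v

lemma cluster_eq_iff {a : V ⊕ Σ v : V, Fin (m v + 1)} {v : V} :
    cluster m a = v ↔ a = Sum.inl v ∨ ∃ k, a = Sum.inr ⟨v, k⟩ := by
  rcases a with u | ⟨u, k⟩
  · simp [cluster]
  · simp only [cluster, reduceCtorEq, false_or, Sum.inr.injEq]
    constructor
    · rintro rfl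
      exact ⟨k, rfl⟩
    · rintro ⟨k', h⟩
      exact congrArg Sigma.fst h

lemma adj_of_cluster_eq {a b : V ⊕ Σ v : V, Fin (m v + 1)} (hne : a ≠ b)
    (h : cluster m a = cluster m b) : (corona G m).Adj a b := by
  refine ⟨hne, ?_⟩
  rcases a with u | ⟨u, j⟩ <;> rcases b with v | ⟨v, k⟩
  · exact absurd (congrArg Sum.inl h) hne
  all_goals simp_all [cluster]

lemma cluster_eq_of_adj_inr {v : V} {k : Fin (m v + 1)} {b : V ⊕ Σ v : V, Fin (m v + 1)}
    (h : (corona G m).Adj (Sum.inr ⟨v, k⟩) b) : cluster m b = v := by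
  obtain ⟨-, h⟩ := h
  rcases b with u | ⟨u, j⟩ <;> simp_all [cluster, eq_comm]

lemma injOn_cluster_of_isIndep {B : Set (V ⊕ Σ v : V, Fin (m v + 1))}
    (hB : IsIndep (corona G m) B) : Set.InjOn (cluster m) B := fun a ha b hb hab => by
  by_contra hne
  exact hB a ha b hb (adj_of_cluster_eq hne hab)

lemma ncard_le_of_isIndep [Finite V] {B : Set (V ⊕ Σ v : V, Fin (m v + 1))}
    (hB : IsIndep (corona G m) B) : B.ncard ≤ Nat.card V := by
  rw [← (injOn_cluster_of_isIndep hB).ncard_image]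
  exact Set.ncard_le_card _

lemma cluster_surjOn_of_maximal {A : Set (V ⊕ Σ v : V, Fin (m v + 1))}
    (hA : IsIndep (corona G m) A) (hmax : ∀ B, IsIndep (corona G m) B → A ⊆ B → A = B) :
    Set.SurjOn (cluster m) A Set.univ := by
  intro v _
  by_contra hmiss
  simp only [Set.mem_image, not_exists, not_and] at hmiss
  have hleaf : IsIndep (corona G m) (insert (Sum.inr ⟨v, 0⟩) A) :=
    isIndep_insert hA fun a ha hadj => hmiss a ha (cluster_eq_of_adj_inr hadj)
  have hmem : Sum.inr ⟨v, 0⟩ ∈ A := by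
    rw [hmax _ hleaf (Set.subset_insert _ A)]
    exact Set.mem_insert _ A
  exact hmiss _ hmem rfl

end corona

open corona in
theorem stmt14 {V : Type*} [Fintype V] (G : SimpleGraph V) (m : V → ℕ)
    (A : Set (V ⊕ Σ v : V, Fin (m v + 1)))
    (hA : IsIndep (corona G m) A)
    (hmax : ∀ B, IsIndep (corona G m) B → A ⊆ B → A = B) :
    A.ncard = Fintype.card V ∧
    (∀ v : V, ∃! a, a ∈ A ∧ (a = Sum.inl v ∨ ∃ k, a = Sum.inr ⟨v, k⟩)) ∧
    ∀ B, IsIndep (corona G m) B → B.ncard ≤ Fintype.card V := by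
  have hinj := injOn_cluster_of_isIndep hA
  have hsurj := cluster_surjOn_of_maximal hA hmax
  refine ⟨?_, fun v => ?_, fun B hB => Nat.card_eq_fintype_card (α := V) ▸ ncard_le_of_isIndep hB⟩
  · rw [← hinj.ncard_image, hsurj.image_eq_of_mapsTo (Set.mapsTo_univ _ _), Set.ncard_univ,
      Nat.card_eq_fintype_card]
  · obtain ⟨a, ha, hav⟩ := hsurj (Set.mem_univ v)
    refine ⟨a, ⟨ha, cluster_eq_iff.mp hav⟩, fun b ⟨hb, hbv⟩ => ?_⟩
    exact hinj hb ha ((cluster_eq_iff.mpr hbv).trans hav.symm)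
end

section
/- Let G be a finite simple graph with clique partition π = {W₁,…,W_r}, let n₁,…,n_r be positive integers, and let H = G^π[n₁,…,n_r] be the multi-clique-whiskered graph. Then there is a bijection between the minimal vertex covers of H and the minimal vertex covers of G^π, given by replacing the set {w_{i,1},…,w_{i,nᵢ}} by the single vertex wᵢ: a set C ⊆ V(H) is a minimal vertex cover of H if and only if for every i either all or none of w_{i,1},…,w_{i,nᵢ} lie in C, and the corresponding set in V(G^π) is a minimal vertex cover of G^π. -/
def multiCliqueWhisker {V ι : Type*} (G : SimpleGraph V) (p : V → ι) (n : ι → ℕ) :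
    SimpleGraph (V ⊕ Σ i : ι, Fin (n i)) :=
  SimpleGraph.fromRel (fun a b =>
    match a, b with
    | Sum.inl u, Sum.inl v => G.Adj u v
    | Sum.inl u, Sum.inr ⟨i, _⟩ => p u = i
    | _, _ => False)


section VertexCover

variable {V W : Type*} {G : SimpleGraph V} {K : SimpleGraph W}

theorem IsVertexCover.diff_singleton {C : Set V} {x : V} (hC : IsVertexCover G C)
    (hx : ∀ y, G.Adj x y → y ∈ C) : IsVertexCover G (C \ {x}) := by
  intro u v huv
  by_cases hu : u = x
  · subst hu
    exact Or.inr ⟨hx v huv, (G.ne_of_adj huv).symm⟩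
  by_cases hv : v = x
  · subst hv
    exact Or.inl ⟨hx u huv.symm, G.ne_of_adj huv⟩
  exact (hC huv).imp (fun h => ⟨h, hu⟩) (fun h => ⟨h, hv⟩)

theorem isMinVertexCover_iff_forall_exists_adj_notMem {C : Set V} :
    IsMinVertexCover G C ↔ IsVertexCover G C ∧ ∀ x ∈ C, ∃ y, G.Adj x y ∧ y ∉ C := by
  refine ⟨fun ⟨hC, hmin⟩ => ⟨hC, fun x hx => ?_⟩, fun ⟨hC, hpriv⟩ => ⟨hC, fun D hDC hD => ?_⟩⟩
  · by_contra! hnbrs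
    have hdiff := hmin _ Set.sdiff_subset (hC.diff_singleton hnbrs)
    exact (hdiff.symm ▸ hx : x ∈ C \ {x}).2 rfl
  · refine hDC.antisymm fun x hx => by_contra fun hxD => ?_
    obtain ⟨y, hxy, hyC⟩ := hpriv x hx
    exact (hD hxy).elim hxD (fun hyD => hyC (hDC hyD))

theorem isVertexCover_preimage_iff {f : V → W} (hf : ∀ a b, G.Adj a b ↔ K.Adj (f a) (f b))
    (hsurj : Function.Surjective f) {D : Set W} :
    IsVertexCover G (f ⁻¹' D) ↔ IsVertexCover K D := by
  refine ⟨fun hC u v huv => ?_, fun hD a b hab => hD ((hf a b).1 hab)⟩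
  obtain ⟨a, rfl⟩ := hsurj u
  obtain ⟨b, rfl⟩ := hsurj v
  exact hC ((hf a b).2 huv)

theorem isMinVertexCover_preimage_iff {f : V → W} (hf : ∀ a b, G.Adj a b ↔ K.Adj (f a) (f b))
    (hsurj : Function.Surjective f) {D : Set W} :
    IsMinVertexCover G (f ⁻¹' D) ↔ IsMinVertexCover K D := by
  simp only [isMinVertexCover_iff_forall_exists_adj_notMem, isVertexCover_preimage_iff hf hsurj]
  refine and_congr_right fun _ => ⟨fun hG u hu => ?_, fun hK a ha => ?_⟩
  · obtain ⟨a, rfl⟩ := hsurj u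
    obtain ⟨b, hab, hb⟩ := hG a hu
    exact ⟨f b, (hf a b).1 hab, hb⟩
  · obtain ⟨v, hav, hv⟩ := hK (f a) ha
    obtain ⟨b, rfl⟩ := hsurj v
    exact ⟨b, (hf a b).2 hav, hv⟩

theorem IsMinVertexCover.mem_of_map_eq {f : V → W} (hf : ∀ a b, G.Adj a b ↔ K.Adj (f a) (f b))
    {C : Set V} (hC : IsMinVertexCover G C) {a b : V} (hab : f a = f b) (ha : a ∈ C) : b ∈ C := by
  obtain ⟨hcover, hpriv⟩ := isMinVertexCover_iff_forall_exists_adj_notMem.1 hC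
  obtain ⟨y, hay, hy⟩ := hpriv a ha
  have hby : G.Adj b y := (hf b y).2 (hab ▸ (hf a y).1 hay)
  exact (hcover hby).resolve_right hy

theorem isMinVertexCover_iff_of_adj_iff {f : V → W} (hf : ∀ a b, G.Adj a b ↔ K.Adj (f a) (f b))
    (hsurj : Function.Surjective f) {C : Set V} :
    IsMinVertexCover G C ↔
      (∀ a b, f a = f b → a ∈ C → b ∈ C) ∧ IsMinVertexCover K (f '' C) := by
  have preimage_image {C : Set V} (hsat : ∀ a b, f a = f b → a ∈ C → b ∈ C) :
      f ⁻¹' (f '' C) = C :=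
    Set.ext fun b => ⟨fun ⟨a, ha, hab⟩ => hsat a b hab ha, fun hb => ⟨b, hb, rfl⟩⟩
  refine ⟨fun hC => ?_, fun ⟨hsat, hK⟩ => ?_⟩
  · have hsat a b (hab : f a = f b) (ha : a ∈ C) : b ∈ C := hC.mem_of_map_eq hf hab ha
    refine ⟨hsat, ?_⟩
    rwa [← isMinVertexCover_preimage_iff hf hsurj, preimage_image hsat]
  · rwa [← isMinVertexCover_preimage_iff hf hsurj, preimage_image hsat] at hK

end VertexCover

section MultiCliqueWhisker

variable {V ι : Type*} {G : SimpleGraph V} {p : V → ι} {n : ι → ℕ}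

def whiskerCollapse : V ⊕ (Σ i : ι, Fin (n i)) → V ⊕ ι :=
  Sum.map id Sigma.fst

theorem multiCliqueWhisker_adj_iff {a b : V ⊕ Σ i : ι, Fin (n i)} :
    (multiCliqueWhisker G p n).Adj a b ↔
      (cliqueWhisker G p).Adj (whiskerCollapse a) (whiskerCollapse b) := by
  rcases a with u | ⟨i, k⟩ <;> rcases b with v | ⟨j, l⟩ <;>
    simp [multiCliqueWhisker, cliqueWhisker, whiskerCollapse]

theorem whiskerCollapse_surjective (hn : ∀ i, 0 < n i) :
    Function.Surjective (whiskerCollapse : V ⊕ (Σ i : ι, Fin (n i)) → V ⊕ ι) :=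
  Function.surjective_id.sumMap (Sigma.fst_surjective_iff.2 fun i => ⟨⟨0, hn i⟩⟩)

theorem whiskerCollapse_saturated_iff {C : Set (V ⊕ Σ i : ι, Fin (n i))} :
    (∀ a b, whiskerCollapse a = whiskerCollapse b → a ∈ C → b ∈ C) ↔
      ∀ i, (∀ k, Sum.inr ⟨i, k⟩ ∈ C) ∨ (∀ k, Sum.inr ⟨i, k⟩ ∉ C) := by
  constructor
  · intro h i
    refine or_iff_not_imp_right.2 fun hsome k => ?_
    obtain ⟨k', hk'⟩ := not_forall_not.1 hsome
    exact h (Sum.inr ⟨i, k'⟩) _ rfl hk'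
  · rintro h (u | ⟨i, k⟩) (v | ⟨j, l⟩) hab ha <;>
      simp only [whiskerCollapse, Sum.map_inl, Sum.map_inr, reduceCtorEq, Sum.inl.injEq,
        Sum.inr.injEq, id] at hab
    · exact hab ▸ ha
    · subst hab
      exact (h i).resolve_right (fun hnone => hnone k ha) l

theorem whiskerCollapse_image (C : Set (V ⊕ Σ i : ι, Fin (n i))) :
    whiskerCollapse '' C =
      (Sum.inl '' {v : V | Sum.inl v ∈ C}) ∪ (Sum.inr '' {i : ι | ∃ k, Sum.inr ⟨i, k⟩ ∈ C}) := by
  ext (v | i) <;> simp [whiskerCollapse]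

end MultiCliqueWhisker

theorem stmt16_general {V : Type*} {r : ℕ} (G : SimpleGraph V) (p : V → Fin r)
    (n : Fin r → ℕ) (hn : ∀ i, 0 < n i)
    (C : Set (V ⊕ Σ i : Fin r, Fin (n i))) :
    IsMinVertexCover (multiCliqueWhisker G p n) C ↔
      ((∀ i : Fin r, (∀ k, Sum.inr ⟨i, k⟩ ∈ C) ∨ (∀ k, Sum.inr ⟨i, k⟩ ∉ C)) ∧
        IsMinVertexCover (cliqueWhisker G p)
          ((Sum.inl '' {v : V | Sum.inl v ∈ C}) ∪
            (Sum.inr '' {i : Fin r | ∃ k, Sum.inr ⟨i, k⟩ ∈ C}))) := by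
  rw [isMinVertexCover_iff_of_adj_iff (fun _ _ => multiCliqueWhisker_adj_iff)
    (whiskerCollapse_surjective hn), whiskerCollapse_saturated_iff, whiskerCollapse_image]

theorem stmt16 {V : Type*} [Fintype V] {r : ℕ} (G : SimpleGraph V) (p : V → Fin r)
    (n : Fin r → ℕ) (hn : ∀ i, 0 < n i)
    (hclique : ∀ u v : V, p u = p v → u ≠ v → G.Adj u v)
    (hsurj : Function.Surjective p)
    (C : Set (V ⊕ Σ i : Fin r, Fin (n i))) :
    IsMinVertexCover (multiCliqueWhisker G p n) C ↔
      ((∀ i : Fin r, (∀ k, Sum.inr ⟨i, k⟩ ∈ C) ∨ (∀ k, Sum.inr ⟨i, k⟩ ∉ C)) ∧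
        IsMinVertexCover (cliqueWhisker G p)
          ((Sum.inl '' {v : V | Sum.inl v ∈ C}) ∪
            (Sum.inr '' {i : Fin r | ∃ k, Sum.inr ⟨i, k⟩ ∈ C}))) :=
  stmt16_general G p n hn C
end

section
/- Let G be a finite simple graph with clique partition π = {W₁,…,W_r}. Then the induced matching number of G^π equals the maximum over minimal vertex covers C of G^π of |V(G) \ C|, that is, im(G^π) = max{|V(G) \ C| : C a minimal vertex cover of G^π}. -/
section Aux

variable {V ι : Type*} {G : SimpleGraph V} {p : V → ι}

lemma cw_ll {u v : V} : (cliqueWhisker G p).Adj (Sum.inl u) (Sum.inl v) ↔ G.Adj u v := by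
  simp only [cliqueWhisker, SimpleGraph.fromRel_adj]
  constructor
  · rintro ⟨h, h1 | h1⟩
    · exact h1
    · exact h1.symm
  · exact fun h => ⟨fun e => G.irrefl (Sum.inl.inj e ▸ h), Or.inl h⟩

lemma cw_lr {u : V} {i : ι} : (cliqueWhisker G p).Adj (Sum.inl u) (Sum.inr i) ↔ p u = i := by
  simp only [cliqueWhisker, SimpleGraph.fromRel_adj]
  constructor
  · rintro ⟨h, h1 | h1⟩
    · exact h1
    · exact h1.elim
  · exact fun h => ⟨by simp, Or.inl h⟩

lemma cw_rr {i j : ι} : ¬ (cliqueWhisker G p).Adj (Sum.inr i) (Sum.inr j) := by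
  simp [cliqueWhisker, SimpleGraph.fromRel_adj]

lemma exists_min_cover {W : Type*} [Fintype W] (H : SimpleGraph W) (A : Set W)
    (hA : IsIndep H A) :
    ∃ C : Set W, IsMinVertexCover H C ∧ A ⊆ Cᶜ := by
  classical
  set S : Finset (Finset W) := Finset.univ.filter (fun T => A ⊆ ↑T ∧ IsIndep H ↑T) with hS
  have hmem : ∀ T : Finset W, T ∈ S ↔ A ⊆ ↑T ∧ IsIndep H ↑T := by
    intro T; simp [hS]
  have hne : S.Nonempty :=
    ⟨A.toFinite.toFinset, (hmem _).2 ⟨by rw [Set.Finite.coe_toFinset], by simpa using hA⟩⟩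
  obtain ⟨T, hT, hmax⟩ := S.exists_max_image Finset.card hne
  obtain ⟨hAT, hTind⟩ := (hmem T).1 hT
  refine ⟨(↑T)ᶜ, ⟨?_, ?_⟩, by simpa using hAT⟩
  · intro u v huv
    by_contra h
    push_neg at h
    simp only [Set.mem_compl_iff, not_not] at h
    exact hTind u h.1 v h.2 huv
  · intro D hD hDcov
    by_contra hne'
    have hx : ∃ x, x ∈ (↑T : Set W)ᶜ ∧ x ∉ D := by
      by_contra hc
      push_neg at hc
      exact hne' (hD.antisymm hc)
    obtain ⟨x, hxC, hxD⟩ := hx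
    have hxT : x ∉ T := by simpa using hxC
    have hDind : IsIndep H Dᶜ := by
      intro u hu v hv huv
      rcases hDcov huv with h | h
      · exact hu h
      · exact hv h
    have hsub : (↑(insert x T) : Set W) ⊆ Dᶜ := by
      intro y hy
      simp only [Finset.coe_insert, Set.mem_insert_iff, Finset.mem_coe] at hy
      rcases hy with rfl | hy
      · exact hxD
      · exact fun hyD => (hD hyD) hy
    have hins : insert x T ∈ S := by
      refine (hmem _).2 ⟨?_, fun u hu v hv => hDind u (hsub hu) v (hsub hv)⟩
      refine hAT.trans ?_
      simp only [Finset.coe_insert]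
      exact Set.subset_insert _ _
    have hle := hmax _ hins
    rw [Finset.card_insert_of_notMem hxT] at hle
    omega

end Aux

theorem stmt17 {V : Type*} [Fintype V] {r : ℕ} (G : SimpleGraph V) (p : V → Fin r)
    (hclique : ∀ u v : V, p u = p v → u ≠ v → G.Adj u v)
    (hsurj : Function.Surjective p) :
    inducedMatchingNumber (cliqueWhisker G p) =
      sSup {k | ∃ C : Set (V ⊕ Fin r),
        IsMinVertexCover (cliqueWhisker G p) C ∧
          Set.ncard {v : V | Sum.inl v ∉ C} = k} := by
  classical
  set H := cliqueWhisker G p with hH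
  set S1 : Set ℕ := {n | ∃ M : Finset (Sym2 (V ⊕ Fin r)), IsInducedMatching H M ∧ M.card = n}
    with hS1
  set S2 : Set ℕ := {k | ∃ C : Set (V ⊕ Fin r), IsMinVertexCover H C ∧
      Set.ncard {v : V | Sum.inl v ∉ C} = k} with hS2
  have hS1ne : S1.Nonempty := ⟨0, ∅, ⟨by simp, by simp⟩, rfl⟩
  have hS2ne : S2.Nonempty := by
    obtain ⟨C, hC, -⟩ := exists_min_cover H ∅ (by intro u hu; simp at hu)
    exact ⟨_, C, hC, rfl⟩
  have hS1bdd : BddAbove S1 := by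
    refine ⟨Fintype.card (Sym2 (V ⊕ Fin r)), ?_⟩
    rintro n ⟨M, -, rfl⟩
    simpa using M.card_le_univ
  have hS2bdd : BddAbove S2 := by
    refine ⟨Fintype.card V, ?_⟩
    rintro k ⟨C, -, rfl⟩
    have := Set.ncard_le_ncard (Set.subset_univ {v : V | Sum.inl v ∉ C}) Set.finite_univ
    simpa [Set.ncard_univ, Nat.card_eq_fintype_card] using this
  show sSup S1 = sSup S2
  apply le_antisymm
  · refine csSup_le hS1ne ?_
    rintro n ⟨M, hM, rfl⟩
    -- every edge of M contains a left vertex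
    have hinl : ∀ e ∈ M, ∃ v : V, Sum.inl v ∈ e := by
      intro e he
      induction e using Sym2.ind with
      | _ a b =>
        have hadj : H.Adj a b := (SimpleGraph.mem_edgeSet H).1 (hM.1 he)
        cases a with
        | inl u => exact ⟨u, by simp⟩
        | inr i =>
          cases b with
          | inl v => exact ⟨v, by simp⟩
          | inr j => exact absurd hadj cw_rr
    let g : {e // e ∈ M} → V := fun e => (hinl e.1 e.2).choose
    have hg : ∀ e : {e // e ∈ M}, Sum.inl (g e) ∈ e.1 := fun e => (hinl e.1 e.2).choose_spec
    have hginj : Function.Injective g := by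
      intro e1 e2 heq
      by_contra hne
      have hvalne : e1.1 ≠ e2.1 := fun h => hne (Subtype.ext h)
      have := (hM.2 e1.1 e1.2 e2.1 e2.2 hvalne (Sum.inl (g e1)) (hg e1)
        (Sum.inl (g e2)) (hg e2)).1
      exact this (by rw [heq])
    set A : Set V := Set.range g with hA
    have hAcard : A.ncard = M.card := by
      rw [hA, ← Nat.card_coe_set_eq, Nat.card_range_of_injective hginj,
        Nat.card_eq_fintype_card, Fintype.card_coe]
    have hAindep : IsIndep G A := by
      rintro u ⟨e1, rfl⟩ v ⟨e2, rfl⟩ hadj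
      by_cases h12 : e1 = e2
      · subst h12
        exact G.irrefl hadj
      · have hvalne : e1.1 ≠ e2.1 := fun h => h12 (Subtype.ext h)
        have := (hM.2 e1.1 e1.2 e2.1 e2.2 hvalne (Sum.inl (g e1)) (hg e1)
          (Sum.inl (g e2)) (hg e2)).2
        exact this (cw_ll.2 hadj)
    have hAindepH : IsIndep H (Sum.inl '' A) := by
      rintro x ⟨a, ha, rfl⟩ y ⟨b, hb, rfl⟩ hadj
      exact hAindep a ha b hb (cw_ll.1 hadj)
    obtain ⟨C, hC, hCA⟩ := exists_min_cover H (Sum.inl '' A) hAindepH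
    have hsub : A ⊆ {v : V | Sum.inl v ∉ C} := by
      intro v hv
      exact hCA ⟨v, hv, rfl⟩
    have hle : A.ncard ≤ Set.ncard {v : V | Sum.inl v ∉ C} :=
      Set.ncard_le_ncard hsub (Set.toFinite _)
    calc M.card = A.ncard := hAcard.symm
      _ ≤ Set.ncard {v : V | Sum.inl v ∉ C} := hle
      _ ≤ sSup S2 := le_csSup hS2bdd ⟨C, hC, rfl⟩
  · refine csSup_le hS2ne ?_
    rintro k ⟨C, hC, rfl⟩
    set A : Set V := {v : V | Sum.inl v ∉ C} with hA
    have hAindep : IsIndep G A := by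
      intro u hu v hv hadj
      rcases hC.1 (cw_ll.2 hadj : H.Adj (Sum.inl u) (Sum.inl v)) with h | h
      · exact hu h
      · exact hv h
    have hpinj : ∀ u ∈ A, ∀ v ∈ A, p u = p v → u = v := by
      intro u hu v hv hpuv
      by_contra hne
      exact hAindep u hu v hv (hclique u v hpuv hne)
    set f : V → Sym2 (V ⊕ Fin r) := fun v => s(Sum.inl v, Sum.inr (p v)) with hf
    have hfinj : Function.Injective f := by
      intro u v huv
      rw [hf] at huv
      simp only [Sym2.eq_iff] at huv
      rcases huv with ⟨h1, -⟩ | ⟨h1, -⟩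
      · exact Sum.inl.inj h1
      · exact absurd h1 (by simp)
    set M : Finset (Sym2 (V ⊕ Fin r)) := A.toFinite.toFinset.image f with hM
    have hMcard : M.card = A.ncard := by
      rw [hM, Finset.card_image_of_injective _ hfinj,
        Set.ncard_eq_toFinset_card A A.toFinite]
    have hmemM : ∀ e ∈ M, ∃ v ∈ A, e = f v := by
      intro e he
      rw [hM] at he
      simp only [Finset.mem_image, Set.Finite.mem_toFinset] at he
      obtain ⟨v, hv, rfl⟩ := he
      exact ⟨v, hv, rfl⟩
    have hMind : IsInducedMatching H M := by
      constructor
      · intro e he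
        obtain ⟨v, hv, rfl⟩ := hmemM e he
        rw [hf]
        exact (SimpleGraph.mem_edgeSet H).2 (cw_lr.2 rfl)
      · intro e he e' he' hne x hx y hy
        obtain ⟨u, hu, rfl⟩ := hmemM e he
        obtain ⟨v, hv, rfl⟩ := hmemM e' he'
        have huv : u ≠ v := fun h => hne (by rw [h])
        have hpuv : p u ≠ p v := fun h => huv (hpinj u hu v hv h)
        rw [hf] at hx hy
        simp only [Sym2.mem_iff] at hx hy
        rcases hx with rfl | rfl <;> rcases hy with rfl | rfl
        · exact ⟨by simp [huv], fun h => hAindep u hu v hv (cw_ll.1 h)⟩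
        · exact ⟨by simp, fun h => hpuv (cw_lr.1 h)⟩
        · exact ⟨by simp, fun h => hpuv (cw_lr.1 h.symm).symm⟩
        · exact ⟨by simp [hpuv], fun h => cw_rr h⟩
    calc A.ncard = M.card := hMcard.symm
      _ ≤ sSup S1 := le_csSup hS1bdd ⟨M, hMind, rfl⟩
end

section
/- Let G be a finite simple graph and let W(G) be its whisker graph, obtained by attaching a pendant vertex y_v to each vertex v ∈ V(G). Then the map C ↦ C ∩ V(G) is a bijection from the set of minimal vertex covers of W(G) to the set of vertex covers of G, with inverse sending a vertex cover D of G to D ∪ {y_v : v ∈ V(G) \ D}. In particular, the number of minimal vertex covers of W(G) equals the number of vertex covers of G, and every minimal vertex cover of W(G) has cardinality |V(G)|. -/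
/-!
A vertex cover `C` of `W(G)` is the same as a set whose trace `D = {v | inl v ∈ C}` covers `G`
and which meets every whisker `{inl v, inr v}`. Hence `C` contains
`inl '' D ∪ inr '' Dᶜ`, which is itself a cover of `W(G)`, so a minimal `C` equals it. Conversely
this set is minimal, because every `inl v` or `inr v` in it is the only one of its whisker in it.
-/

section WhiskerGraph

variable {V : Type*} {G : SimpleGraph V}

@[simp]
lemma whiskerGraph_adj_inl_inl {u v : V} :
    (whiskerGraph G).Adj (Sum.inl u) (Sum.inl v) ↔ G.Adj u v := by
  simp only [whiskerGraph, SimpleGraph.fromRel_adj, ne_eq, Sum.inl.injEq]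
  exact ⟨fun ⟨_, h⟩ => h.elim id (·.symm), fun h => ⟨h.ne, .inl h⟩⟩

@[simp]
lemma whiskerGraph_adj_inl_inr {u v : V} :
    (whiskerGraph G).Adj (Sum.inl u) (Sum.inr v) ↔ u = v := by
  simp [whiskerGraph]

lemma isVertexCover_whiskerGraph_iff {C : Set (V ⊕ V)} :
    IsVertexCover (whiskerGraph G) C ↔
      IsVertexCover G {v | Sum.inl v ∈ C} ∧ ∀ v, Sum.inl v ∈ C ∨ Sum.inr v ∈ C := by
  refine ⟨fun hC => ⟨fun u v huv => hC (whiskerGraph_adj_inl_inl.2 huv),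
    fun v => hC (whiskerGraph_adj_inl_inr.2 rfl)⟩, ?_⟩
  rintro ⟨hG, hwhisker⟩ (u | u) (v | v) huv
  · exact hG (whiskerGraph_adj_inl_inl.1 huv)
  · obtain rfl := whiskerGraph_adj_inl_inr.1 huv
    exact hwhisker _
  · obtain rfl := whiskerGraph_adj_inl_inr.1 huv.symm
    exact (hwhisker _).symm
  · simp [whiskerGraph] at huv

/-- `D ∪ {y_v : v ∉ D}`, the whisker `y_v` being `Sum.inr v`. -/
def whiskerCover (D : Set V) : Set (V ⊕ V) :=
  Sum.inl '' D ∪ Sum.inr '' Dᶜ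

@[simp]
lemma inl_mem_whiskerCover {D : Set V} {v : V} : Sum.inl v ∈ whiskerCover D ↔ v ∈ D := by
  simp [whiskerCover]

@[simp]
lemma inr_mem_whiskerCover {D : Set V} {v : V} : Sum.inr v ∈ whiskerCover D ↔ v ∉ D := by
  simp [whiskerCover]

lemma isMinVertexCover_whiskerCover {D : Set V} (hD : IsVertexCover G D) :
    IsMinVertexCover (whiskerGraph G) (whiskerCover D) := by
  refine ⟨isVertexCover_whiskerGraph_iff.2 ⟨by simpa using hD, fun v => by simp [em]⟩, ?_⟩
  intro C hCD hC
  refine hCD.antisymm ?_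
  rintro (v | v) hv <;> rcases (isVertexCover_whiskerGraph_iff.1 hC).2 v with h | h
  · exact h
  · exact absurd (inl_mem_whiskerCover.1 hv) (inr_mem_whiskerCover.1 (hCD h))
  · exact absurd (inl_mem_whiskerCover.1 (hCD h)) (inr_mem_whiskerCover.1 hv)
  · exact h

lemma IsMinVertexCover.eq_whiskerCover {C : Set (V ⊕ V)}
    (hC : IsMinVertexCover (whiskerGraph G) C) :
    C = whiskerCover {v | Sum.inl v ∈ C} := by
  obtain ⟨hG, hwhisker⟩ := isVertexCover_whiskerGraph_iff.1 hC.1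
  refine (hC.2 _ ?_ (isMinVertexCover_whiskerCover hG).1).symm
  rintro (v | v) hv
  · simpa using hv
  · exact (hwhisker v).resolve_left (by simpa using hv)

lemma ncard_whiskerCover [Finite V] (D : Set V) : (whiskerCover D).ncard = Nat.card V := by
  have hdisj : Disjoint (Sum.inl '' D) (Sum.inr '' Dᶜ : Set (V ⊕ V)) :=
    Set.disjoint_left.2 (by rintro _ ⟨u, -, rfl⟩ ⟨w, -, ⟨⟩⟩)
  rw [whiskerCover, Set.ncard_union_eq hdisj,
    Set.ncard_image_of_injective _ Sum.inl_injective,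
    Set.ncard_image_of_injective _ Sum.inr_injective, Set.ncard_add_ncard_compl]

def minVertexCoverWhiskerEquiv (G : SimpleGraph V) :
    {C : Set (V ⊕ V) // IsMinVertexCover (whiskerGraph G) C} ≃ {D : Set V // IsVertexCover G D}
    where
  toFun C := ⟨{v | Sum.inl v ∈ C.1}, (isVertexCover_whiskerGraph_iff.1 C.2.1).1⟩
  invFun D := ⟨whiskerCover D.1, isMinVertexCover_whiskerCover D.2⟩
  left_inv C := Subtype.ext C.2.eq_whiskerCover.symm
  right_inv D := Subtype.ext (by ext; simp)

end WhiskerGraph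

theorem stmt18 {V : Type*} [Fintype V] (G : SimpleGraph V) :
    (∀ C : Set (V ⊕ V), IsMinVertexCover (whiskerGraph G) C →
        IsVertexCover G {v : V | Sum.inl v ∈ C}) ∧
    (∀ D : Set V, IsVertexCover G D →
        IsMinVertexCover (whiskerGraph G)
          ((Sum.inl '' D) ∪ (Sum.inr '' Dᶜ))) ∧
    (∀ C : Set (V ⊕ V), IsMinVertexCover (whiskerGraph G) C →
        C = (Sum.inl '' {v : V | Sum.inl v ∈ C}) ∪
          (Sum.inr '' {v : V | Sum.inl v ∈ C}ᶜ)) ∧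
    (∀ C : Set (V ⊕ V), IsMinVertexCover (whiskerGraph G) C →
        C.ncard = Fintype.card V) ∧
    Nat.card {C : Set (V ⊕ V) // IsMinVertexCover (whiskerGraph G) C} =
      Nat.card {D : Set V // IsVertexCover G D} := by
  refine ⟨fun C hC => (isVertexCover_whiskerGraph_iff.1 hC.1).1,
    fun D hD => isMinVertexCover_whiskerCover hD,
    fun C hC => hC.eq_whiskerCover, fun C hC => ?_,
    Nat.card_congr (minVertexCoverWhiskerEquiv G)⟩
  rw [hC.eq_whiskerCover, ncard_whiskerCover, Nat.card_eq_fintype_card]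
end
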